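/- arXiv:2004.09334 — 2 statements merged into one kernel-verified Lean document; each statement's English description precedes it below -/
import Mathlib

section
/- Second contiguous relation for the Lauricella function: let n ≥ 1, let a, b_1,…,b_n, c_1,…,c_n be complex numbers such that no c_k and no c_k − 1 is a nonpositive integer, and let y ∈ ℂ^n with |y_1|+⋯+|y_n| < 1. Then for each k ∈ {1,…,n}, (a b_k y_k)/((c_k−1) c_k) · F_A^{(n)}(a+1, b_1,…,b_{k−1}, b_k+1, b_{k+1},…,b_n; c_1,…,c_{k−1}, c_k+1, c_{k+1},…,c_n; y) = F_A^{(n)}(a, b_1,…,b_n; c_1,…,c_{k−1}, c_k−1, c_{k+1},…,c_n; y) − F_A^{(n)}(a, b_1,…,b_n; c_1,…,c_n; y). -/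
noncomputable section

open scoped BigOperators

/-- The Pochhammer symbol `(λ)_p = λ(λ+1)⋯(λ+p−1)`. -/
def poch (lam : ℂ) (p : ℕ) : ℂ := (ascPochhammer ℂ p).eval lam

/-- The Lauricella hypergeometric function `F_A^{(n)}(a, b; c; y)`, defined by its
multiple power series (absolutely convergent for `|y_1|+⋯+|y_n| < 1`). -/
def lauricellaFA {n : ℕ} (a : ℂ) (b c y : Fin n → ℂ) : ℂ :=
  ∑' μ : Fin n → ℕ,
    poch a (∑ k, μ k) *
      ∏ k, poch (b k) (μ k) / (poch (c k) (μ k) * (Nat.factorial (μ k) : ℂ)) * y k ^ μ k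

/-!
Shifting the `k`-th index by one, the one-variable identity
`(b)_{m+1} y^{m+1} / ((c-1)_{m+1} (m+1)!) - (b)_{m+1} y^{m+1} / ((c)_{m+1} (m+1)!)
  = b y / ((c-1) c) * (b+1)_m y^m / ((c+1)_m m!)`,
together with `(a)_{|ν|+1} = a (a+1)_{|ν|}`, turns the general term of the left-hand side at `ν`
into the difference of the general terms of the two right-hand series at `ν + e_k`; at
multi-indices with `μ_k = 0` those two terms coincide. The right-hand series converge absolutely:
for `ρ > 1` one has `|(b)_m| ≤ K ρ^m |(c)_m|` and `|(a)_m| ≤ K ρ^m m!`, so their terms are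
dominated by the multinomial expansion of the geometric series `∑_S (ρ² ∑_k |y_k|)^S`.
-/

open Finset Function Filter Topology
open scoped Nat

lemma poch_zero (x : ℂ) : poch x 0 = 1 := by simp [poch]

lemma poch_succ (x : ℂ) (m : ℕ) : poch x (m + 1) = poch x m * (x + m) :=
  ascPochhammer_succ_eval m x

lemma poch_succ_left (x : ℂ) (m : ℕ) : poch x (m + 1) = x * poch (x + 1) m := by
  simp [poch, ascPochhammer_succ_left, Polynomial.eval_comp]

lemma poch_one (m : ℕ) : poch 1 m = m ! := ascPochhammer_eval_one ℂ m

lemma poch_ne_zero {x : ℂ} (hx : ∀ p : ℕ, x ≠ -p) (m : ℕ) : poch x m ≠ 0 := by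
  induction m with
  | zero => simp [poch_zero]
  | succ m ih => exact poch_succ x m ▸ mul_ne_zero ih fun h => hx m (by linear_combination h)

lemma eventually_norm_add_natCast_le (x c : ℂ) {r : ℝ} (hr : 1 < r) :
    ∀ᶠ m : ℕ in atTop, ‖x + m‖ ≤ r * ‖c + m‖ := by
  obtain ⟨M, hM⟩ := exists_nat_ge ((‖x‖ + r * ‖c‖) / (r - 1))
  filter_upwards [eventually_ge_atTop M] with m hm
  have hMm : (‖x‖ + r * ‖c‖) / (r - 1) ≤ m := hM.trans (by exact_mod_cast hm)
  rw [div_le_iff₀ (by linarith)] at hMm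
  have hx : ‖x + m‖ ≤ ‖x‖ + m := by simpa using norm_add_le x m
  have hc : (m : ℝ) ≤ ‖c + m‖ + ‖c‖ := by simpa using norm_sub_le (c + m) c
  nlinarith

lemma exists_norm_poch_le (x c : ℂ) (hc : ∀ p : ℕ, c ≠ -p) {ρ : ℝ} (hρ : 1 < ρ) :
    ∃ K : ℝ, ∀ m, ‖poch x m‖ ≤ K * ρ ^ m * ‖poch c m‖ := by
  obtain ⟨r, hr, hrρ⟩ := exists_between hρ
  set f : ℕ → ℝ := fun m => ‖poch x m‖ / (ρ ^ m * ‖poch c m‖) with hf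
  have hpos : ∀ m, 0 < ρ ^ m * ‖poch c m‖ := fun m =>
    mul_pos (pow_pos (by linarith) m) (norm_pos_iff.2 (poch_ne_zero hc m))
  have hf0 : ∀ m, 0 ≤ f m := fun m => div_nonneg (norm_nonneg _) (hpos m).le
  have hstep : ∀ m, f (m + 1) = f m * (‖x + m‖ / (ρ * ‖c + m‖)) := fun m => by
    simp only [hf, poch_succ, norm_mul, pow_succ]
    field_simp
  have hsum : Summable f := by
    refine summable_of_ratio_norm_eventually_le ((div_lt_one (by linarith)).2 hrρ) ?_
    filter_upwards [eventually_norm_add_natCast_le x c hr] with m hm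
    have hcm : 0 < ‖c + m‖ := norm_pos_iff.2 fun h => hc m (by linear_combination h)
    rw [Real.norm_of_nonneg (hf0 _), Real.norm_of_nonneg (hf0 _), hstep, mul_comm]
    refine mul_le_mul_of_nonneg_right ?_ (hf0 m)
    rw [div_le_div_iff₀ (by positivity) (by linarith)]
    nlinarith
  refine ⟨∑' m, f m, fun m => ?_⟩
  have hm := hsum.le_tsum m fun j _ => hf0 j
  rw [hf, div_le_iff₀ (hpos m)] at hm
  linarith

lemma summable_multinomial_mul_prod_pow {ι : Type*} [Fintype ι] [DecidableEq ι] {x : ι → ℝ}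
    (hx : ∀ i, 0 ≤ x i) (hsum : ∑ i, x i < 1) :
    Summable fun μ : ι → ℕ => (Nat.multinomial univ μ : ℝ) * ∏ i, x i ^ μ i := by
  have hfibre : ∀ μ : ι → ℕ, ∃! S : ℕ, μ ∈ ((piAntidiag univ S : Finset (ι → ℕ)) : Set (ι → ℕ)) :=
    fun μ => ⟨∑ i, μ i, by simp, fun S h => by simpa [eq_comm] using h⟩
  have h0 : 0 ≤ fun μ : ι → ℕ => (Nat.multinomial univ μ : ℝ) * ∏ i, x i ^ μ i :=
    fun μ => mul_nonneg (Nat.cast_nonneg _) (prod_nonneg fun i _ => pow_nonneg (hx i) _)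
  refine (summable_partition h0 hfibre).2 ⟨fun S => .of_finite, ?_⟩
  have hS : ∀ S : ℕ, ∑' μ : ((piAntidiag univ S : Finset (ι → ℕ)) : Set (ι → ℕ)),
      (Nat.multinomial univ μ.1 : ℝ) * ∏ i, x i ^ μ.1 i = (∑ i, x i) ^ S := fun S => by
    rw [sum_pow_eq_sum_piAntidiag]
    exact Finset.tsum_subtype _ (fun μ : ι → ℕ => (Nat.multinomial univ μ : ℝ) * ∏ i, x i ^ μ i)
  simp only [hS]
  exact summable_geometric_of_lt_one (sum_nonneg fun i _ => hx i) hsum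

def lauricellaFactor (b c y : ℂ) (m : ℕ) : ℂ := poch b m / (poch c m * m !) * y ^ m

def lauricellaTerm {n : ℕ} (a : ℂ) (b c y : Fin n → ℂ) (μ : Fin n → ℕ) : ℂ :=
  poch a (∑ k, μ k) * ∏ k, lauricellaFactor (b k) (c k) (y k) (μ k)

lemma lauricellaFA_eq_tsum {n : ℕ} (a : ℂ) (b c y : Fin n → ℂ) :
    lauricellaFA a b c y = ∑' μ, lauricellaTerm a b c y μ := rfl

lemma lauricellaFactor_zero (b c y : ℂ) : lauricellaFactor b c y 0 = 1 := by
  simp [lauricellaFactor, poch_zero]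

lemma norm_lauricellaFactor_le {b c : ℂ} (hc : ∀ p : ℕ, c ≠ -p) (y : ℂ) {K ρ : ℝ} {m : ℕ}
    (hK : ‖poch b m‖ ≤ K * ρ ^ m * ‖poch c m‖) :
    ‖lauricellaFactor b c y m‖ ≤ K * (ρ * ‖y‖) ^ m / m ! := by
  have hcm : 0 < ‖poch c m‖ := norm_pos_iff.2 (poch_ne_zero hc m)
  rw [lauricellaFactor, norm_mul, norm_div, norm_mul, norm_pow, Complex.norm_natCast,
    mul_pow, div_mul_eq_mul_div, div_le_div_iff₀ (by positivity) (by positivity)]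
  calc ‖poch b m‖ * ‖y‖ ^ m * m ! ≤ K * ρ ^ m * ‖poch c m‖ * ‖y‖ ^ m * m ! := by gcongr
    _ = K * (ρ ^ m * ‖y‖ ^ m) * (‖poch c m‖ * m !) := by ring

lemma lauricellaFactor_sub_one_sub {b c : ℂ} (hc : ∀ p : ℕ, c ≠ -p) (hc₁ : c - 1 ≠ 0)
    (y : ℂ) (m : ℕ) :
    lauricellaFactor b (c - 1) y (m + 1) - lauricellaFactor b c y (m + 1) =
      b * y / ((c - 1) * c) * lauricellaFactor (b + 1) (c + 1) y m := by
  have hcm : c + m ≠ 0 := fun h => hc m (by linear_combination h)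
  have hshift : poch c m = c * poch (c + 1) m / (c + m) := by
    rw [eq_div_iff hcm, ← poch_succ, poch_succ_left]
  simp only [lauricellaFactor, poch_succ_left, sub_add_cancel, Nat.factorial_succ, pow_succ, hshift]
  push_cast
  field_simp
  ring

lemma prod_lauricellaFactor_update {n : ℕ} (b c y : Fin n → ℂ) (ν : Fin n → ℕ) (k : Fin n)
    (b' c' : ℂ) (m : ℕ) :
    ∏ j, lauricellaFactor (update b k b' j) (update c k c' j) (y j) (update ν k m j) =
      lauricellaFactor b' c' (y k) m *
        ∏ j ∈ univ.erase k, lauricellaFactor (b j) (c j) (y j) (ν j) := by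
  rw [← mul_prod_erase _ _ (mem_univ k)]
  simp only [update_self]
  congr 1
  exact prod_congr rfl fun j hj => by simp only [update_of_ne (ne_of_mem_erase hj)]

lemma lauricellaTerm_update_sub {n : ℕ} (a : ℂ) (b c y : Fin n → ℂ) {k : Fin n}
    (hc : ∀ p : ℕ, c k ≠ -p) (hc₁ : c k - 1 ≠ 0) (ν : Fin n → ℕ) :
    lauricellaTerm a b (update c k (c k - 1)) y (update ν k (ν k + 1)) -
        lauricellaTerm a b c y (update ν k (ν k + 1)) =
      a * b k * y k / ((c k - 1) * c k) *
        lauricellaTerm (a + 1) (update b k (b k + 1)) (update c k (c k + 1)) y ν := by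
  have hsum : ∑ j, update ν k (ν k + 1) j = ∑ j, ν j + 1 := by
    rw [sum_update_of_mem (mem_univ k), ← add_sum_erase univ ν (mem_univ k),
      sdiff_singleton_eq_erase]
    ring
  have h₁ := prod_lauricellaFactor_update b c y ν k (b k) (c k - 1) (ν k + 1)
  have h₂ := prod_lauricellaFactor_update b c y ν k (b k) (c k) (ν k + 1)
  have h₃ := prod_lauricellaFactor_update b c y ν k (b k + 1) (c k + 1) (ν k)
  simp only [update_eq_self] at h₁ h₂ h₃
  rw [lauricellaTerm, lauricellaTerm, lauricellaTerm, hsum, h₁, h₂, h₃, poch_succ_left]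
  linear_combination (a * poch (a + 1) (∑ j, ν j) *
    ∏ j ∈ univ.erase k, lauricellaFactor (b j) (c j) (y j) (ν j)) *
      lauricellaFactor_sub_one_sub (b := b k) hc hc₁ (y k) (ν k)

lemma lauricellaTerm_update_of_eq_zero {n : ℕ} (a : ℂ) (b c y : Fin n → ℂ) {k : Fin n} (c' : ℂ)
    {μ : Fin n → ℕ} (hμ : μ k = 0) :
    lauricellaTerm a b (update c k c') y μ = lauricellaTerm a b c y μ := by
  have h := prod_lauricellaFactor_update b c y μ k (b k) c' 0
  have h' := prod_lauricellaFactor_update b c y μ k (b k) (c k) 0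
  simp only [update_eq_self, ← hμ] at h h'
  rw [lauricellaTerm, lauricellaTerm, h, h', hμ, lauricellaFactor_zero, lauricellaFactor_zero]

lemma summable_lauricellaTerm {n : ℕ} (a : ℂ) (b c y : Fin n → ℂ)
    (hc : ∀ k : Fin n, ∀ p : ℕ, c k ≠ -p) (hy : ∑ k, ‖y k‖ < 1) :
    Summable (lauricellaTerm a b c y) := by
  obtain ⟨ρ, hρ, hρy⟩ : ∃ ρ : ℝ, 1 < ρ ∧ ρ ^ 2 * ∑ k, ‖y k‖ < 1 := by
    have hcont : Tendsto (fun ρ : ℝ => ρ ^ 2 * ∑ k, ‖y k‖) (𝓝[>] 1) (𝓝 (1 ^ 2 * ∑ k, ‖y k‖)) :=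
      ((continuous_pow 2).mul continuous_const).continuousAt.tendsto.mono_left nhdsWithin_le_nhds
    exact (eventually_mem_nhdsWithin.and (hcont.eventually_lt_const (by simpa using hy))).exists
  have hone : ∀ p : ℕ, (1 : ℂ) ≠ -p := fun p => by
    rw [ne_eq, eq_neg_iff_add_eq_zero, add_comm]
    exact_mod_cast p.succ_ne_zero
  obtain ⟨K₀, hK₀⟩ := exists_norm_poch_le a 1 hone hρ
  have hK₀_nonneg : 0 ≤ K₀ := by simpa [poch_zero] using (norm_nonneg _).trans (hK₀ 0)
  choose K hK using fun k => exists_norm_poch_le (b k) (c k) (hc k) hρ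
  set z : Fin n → ℝ := fun k => ρ ^ 2 * ‖y k‖
  have hz : ∑ k, z k < 1 := by simpa [z, ← mul_sum] using hρy
  refine .of_norm_bounded ((summable_multinomial_mul_prod_pow
    (fun k => by positivity) hz).mul_left (K₀ * ∏ k, K k)) fun μ => ?_
  set S := ∑ k, μ k
  have hfac : ∀ k, (ρ ^ μ k * (μ k)! : ℝ) * (K k * (ρ * ‖y k‖) ^ μ k / (μ k)!) =
      K k * z k ^ μ k := fun k => by
    field_simp
    ring
  have hspec : (S ! : ℝ) = (∏ k, ((μ k)! : ℝ)) * Nat.multinomial univ μ := by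
    exact_mod_cast (Nat.multinomial_spec univ μ).symm
  calc ‖lauricellaTerm a b c y μ‖
      = ‖poch a S‖ * ∏ k, ‖lauricellaFactor (b k) (c k) (y k) (μ k)‖ := by
        rw [lauricellaTerm, norm_mul, norm_prod]
    _ ≤ K₀ * ρ ^ S * S ! * ∏ k, K k * (ρ * ‖y k‖) ^ μ k / (μ k)! := by
        gcongr with k
        · simpa [poch_one] using hK₀ S
        · exact norm_lauricellaFactor_le (hc k) (y k) (hK k (μ k))
    _ = K₀ * (∏ k, K k) * (Nat.multinomial univ μ * ∏ k, z k ^ μ k) := by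
        rw [← prod_pow_eq_pow_sum, hspec]
        calc _ = K₀ * Nat.multinomial univ μ *
              ∏ k, ρ ^ μ k * (μ k)! * (K k * (ρ * ‖y k‖) ^ μ k / (μ k)!) := by
              rw [prod_mul_distrib, prod_mul_distrib]; ring
          _ = _ := by simp only [hfac, prod_mul_distrib]; ring

lemma tsum_update_succ_eq {ι α : Type*} [DecidableEq ι] [AddCommMonoid α] [TopologicalSpace α]
    {f : (ι → ℕ) → α} (k : ι) (hf : ∀ μ, μ k = 0 → f μ = 0) :
    ∑' ν, f (update ν k (ν k + 1)) = ∑' μ, f μ := by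
  refine Injective.tsum_eq (fun ν ν' h => funext fun j => ?_) fun μ hμ => ?_
  · have hj := congrFun h j
    rcases eq_or_ne j k with rfl | hjk
    · simpa using hj
    · simpa [update_of_ne hjk] using hj
  · refine ⟨update μ k (μ k - 1), ?_⟩
    have hμk : μ k ≠ 0 := fun h => hμ (hf μ h)
    simp [Nat.sub_add_cancel (Nat.pos_of_ne_zero hμk)]

theorem lauricellaFA_contiguous_second_general {n : ℕ} (a : ℂ) (b c : Fin n → ℂ)
    (hc : ∀ k : Fin n, ∀ p : ℕ, c k ≠ -(p : ℂ))
    (hc' : ∀ k : Fin n, ∀ p : ℕ, c k - 1 ≠ -(p : ℂ)) (y : Fin n → ℂ)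
    (hy : ∑ k, ‖y k‖ < 1) (k : Fin n) :
    a * b k * y k / ((c k - 1) * c k) *
        lauricellaFA (a + 1) (Function.update b k (b k + 1))
          (Function.update c k (c k + 1)) y =
      lauricellaFA a b (Function.update c k (c k - 1)) y - lauricellaFA a b c y := by
  have hc₁ : c k - 1 ≠ 0 := by simpa using hc' k 0
  have hc_sub : ∀ j (p : ℕ), update c k (c k - 1) j ≠ -p := fun j p => by
    rcases eq_or_ne j k with rfl | hj
    · simpa using hc' j p
    · simpa [update_of_ne hj] using hc j p
  have hvanish : ∀ μ : Fin n → ℕ, μ k = 0 →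
      lauricellaTerm a b (update c k (c k - 1)) y μ - lauricellaTerm a b c y μ = 0 :=
    fun μ hμ => sub_eq_zero.2 (lauricellaTerm_update_of_eq_zero a b c y _ hμ)
  rw [lauricellaFA_eq_tsum, lauricellaFA_eq_tsum, lauricellaFA_eq_tsum, ← tsum_mul_left,
    ← (summable_lauricellaTerm a b _ y hc_sub hy).tsum_sub (summable_lauricellaTerm a b c y hc hy),
    ← tsum_update_succ_eq k hvanish]
  exact tsum_congr fun ν => (lauricellaTerm_update_sub a b c y (hc k) hc₁ ν).symm

/-- Second contiguous relation for the Lauricella function: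
`(a b_k y_k)/((c_k−1)c_k) F_A^{(n)}(a+1, b+e_k; c+e_k; y)
  = F_A^{(n)}(a, b; c−e_k; y) − F_A^{(n)}(a, b; c; y)`. -/
theorem lauricellaFA_contiguous_second {n : ℕ} (hn : 1 ≤ n) (a : ℂ) (b c : Fin n → ℂ)
    (hc : ∀ k : Fin n, ∀ p : ℕ, c k ≠ -(p : ℂ))
    (hc' : ∀ k : Fin n, ∀ p : ℕ, c k - 1 ≠ -(p : ℂ)) (y : Fin n → ℂ)
    (hy : ∑ k, ‖y k‖ < 1) (k : Fin n) :
    a * b k * y k / ((c k - 1) * c k) *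
        lauricellaFA (a + 1) (Function.update b k (b k + 1))
          (Function.update c k (c k + 1)) y =
      lauricellaFA a b (Function.update c k (c k - 1)) y - lauricellaFA a b c y :=
  lauricellaFA_contiguous_second_general a b c hc hc' y hy k
end
end

section
/- Uniqueness for the Dirichlet problem (Theorem of Section 7): let m > 2, 1 ≤ n ≤ m, α_1,…,α_n ∈ (0,1/2), and let Ω be a bounded open subset of R_m^{n+}. Suppose u: cl(Ω) → ℝ is continuous on the closure of Ω, continuously differentiable on the closure with (∏_{k=1}^n x_k^{2α_k})·∇u extending continuously to cl(Ω), twice continuously differentiable on Ω, satisfies H_α^{(m,n)}(u) = 0 at every point of Ω, and vanishes on the entire topological boundary of Ω. Then u ≡ 0 on cl(Ω). Consequently, a regular solution of the Dirichlet problem for H_α^{(m,n)}(u) = 0 with prescribed continuous boundary data, if it exists, is unique. -/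
/-!
A weak maximum principle. At an interior local maximum the gradient vanishes, so the singular
drift term of `Hop` drops out, and the pure second derivatives are nonpositive; hence `Hop ≤ 0`
there. Adding `ε x_k²` to a subsolution makes `Hop` strictly positive, which pushes the maximum
over the compact closure onto the frontier; letting `ε → 0` gives `u ≤ 0`. Apply this to `u`
and `-u`.
-/

noncomputable section

open scoped BigOperators

/-- The partial derivative `∂u/∂x_i` of a function `u : ℝ^m → ℝ`. -/
def pd {m : ℕ} (u : (Fin m → ℝ) → ℝ) (i : Fin m) (x : Fin m → ℝ) : ℝ :=
  fderiv ℝ u x (Pi.single i 1)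

/-- The singular elliptic operator
`H_α^{(m,n)}(u) = Σ_{i=1}^m ∂²u/∂x_i² + Σ_{k=1}^n (2α_k/x_k) ∂u/∂x_k`. -/
def Hop {m n : ℕ} (hnm : n ≤ m) (α : Fin n → ℝ) (u : (Fin m → ℝ) → ℝ)
    (x : Fin m → ℝ) : ℝ :=
  (∑ i, pd (pd u i) i x) +
    ∑ k, 2 * α k / x (Fin.castLE hnm k) * pd u (Fin.castLE hnm k) x

open Filter Topology

theorem deriv_deriv_nonpos_of_isLocalMax {f : ℝ → ℝ} {x₀ : ℝ} (hmax : IsLocalMax f x₀)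
    (hc : ContinuousAt f x₀) : deriv (deriv f) x₀ ≤ 0 := by
  by_contra! hpos
  -- The second derivative test would make `x₀` a local minimum too, so `f` is locally constant.
  have hmin := isLocalMin_of_deriv_deriv_pos hpos hmax.deriv_eq_zero hc
  have hconst : f =ᶠ[𝓝 x₀] fun _ => f x₀ := by
    filter_upwards [hmax, hmin] with x hle hge using le_antisymm hle hge
  have : deriv (deriv f) x₀ = 0 := by
    rw [hconst.deriv.deriv_eq]
    simp
  exact hpos.ne' this

section PartialDerivatives

variable {m : ℕ} {u w : (Fin m → ℝ) → ℝ} {x : Fin m → ℝ} {i : Fin m}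

theorem pd_add (hu : DifferentiableAt ℝ u x) (hw : DifferentiableAt ℝ w x) :
    pd (u + w) i x = pd u i x + pd w i x := by
  simp only [pd, fderiv_add hu hw, add_apply]

theorem pd_neg : pd (-u) i = -pd u i := by
  funext p
  simp only [pd, fderiv_neg, neg_apply, Pi.neg_apply]

theorem ContDiffAt.differentiableAt_pd (hu : ContDiffAt ℝ 2 u x) :
    DifferentiableAt ℝ (pd u i) x :=
  ((hu.fderiv_right (m := 1) (by norm_num)).clm_apply contDiffAt_const).differentiableAt
    (by norm_num)

theorem pd_pd_add (hu : ContDiffAt ℝ 2 u x) (hw : ContDiffAt ℝ 2 w x) :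
    pd (pd (u + w) i) i x = pd (pd u i) i x + pd (pd w i) i x := by
  have hgerm : pd (u + w) i =ᶠ[𝓝 x] pd u i + pd w i := by
    filter_upwards [hu.eventually (by simp), hw.eventually (by simp)] with p hup hwp
    exact pd_add (hup.differentiableAt (by norm_num)) (hwp.differentiableAt (by norm_num))
  rw [pd, hgerm.fderiv_eq, ← pd, pd_add hu.differentiableAt_pd hw.differentiableAt_pd]

theorem pd_pd_nonpos_of_isLocalMax (hu : ContDiffAt ℝ 2 u x) (hmax : IsLocalMax u x) :
    pd (pd u i) i x ≤ 0 := by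
  set line : ℝ → Fin m → ℝ := fun t => x + t • Pi.single i 1
  have hline : ∀ t, HasDerivAt line (Pi.single i 1) t := fun t =>
    (((hasDerivAt_id' t).smul_const (Pi.single i (1 : ℝ))).const_add x).congr_deriv (one_smul _ _)
  have hline0 : line 0 = x := by simp [line]
  have hcont : ContinuousAt line 0 := (hline 0).continuousAt
  have htend : Tendsto line (𝓝 0) (𝓝 x) := hline0 ▸ hcont.tendsto
  have hderiv : deriv (u ∘ line) =ᶠ[𝓝 0] pd u i ∘ line := by
    have hC2 := htend.eventually (hu.eventually (by simp))
    filter_upwards [hC2] with t ht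
    exact ((ht.differentiableAt (by norm_num)).hasFDerivAt.comp_hasDerivAt t (hline t)).deriv
  have hsecond : deriv (pd u i ∘ line) 0 = pd (pd u i) i x := by
    rw [← hline0] at hu ⊢
    exact (hu.differentiableAt_pd.hasFDerivAt.comp_hasDerivAt 0 (hline 0)).deriv
  rw [← hsecond, ← hderiv.deriv_eq]
  rw [← hline0] at hu hmax
  exact deriv_deriv_nonpos_of_isLocalMax (hmax.comp_continuous hcont)
    (hu.continuousAt.comp hcont)

theorem pd_comp_apply {g : ℝ → ℝ} (hg : Differentiable ℝ g) (j i : Fin m) :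
    pd (fun p => g (p j)) i = fun p => if i = j then deriv g (p j) else 0 := by
  funext p
  have h : HasFDerivAt (fun p : Fin m → ℝ => g (p j)) (deriv g (p j) • .proj j) p :=
    (hg (p j)).hasDerivAt.comp_hasFDerivAt p (hasFDerivAt_apply (𝕜 := ℝ) j p)
  simp [pd, h.fderiv, Pi.single_apply, eq_comm]

end PartialDerivatives

section Operator

variable {m n : ℕ} (hnm : n ≤ m) (α : Fin n → ℝ)

theorem Hop_add {u w : (Fin m → ℝ) → ℝ} {x : Fin m → ℝ} (hu : ContDiffAt ℝ 2 u x)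
    (hw : ContDiffAt ℝ 2 w x) : Hop hnm α (u + w) x = Hop hnm α u x + Hop hnm α w x := by
  have hu1 := hu.differentiableAt (by norm_num)
  have hw1 := hw.differentiableAt (by norm_num)
  simp only [Hop, pd_pd_add hu hw, pd_add hu1 hw1, Finset.sum_add_distrib, mul_add]
  ring

theorem Hop_neg (u : (Fin m → ℝ) → ℝ) (x : Fin m → ℝ) :
    Hop hnm α (-u) x = -Hop hnm α u x := by
  simp only [Hop, pd_neg, Pi.neg_apply, neg_add, Finset.sum_neg_distrib, mul_neg]

theorem Hop_nonpos_of_isLocalMax {u : (Fin m → ℝ) → ℝ} {x : Fin m → ℝ}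
    (hu : ContDiffAt ℝ 2 u x) (hmax : IsLocalMax u x) : Hop hnm α u x ≤ 0 := by
  have hgrad : ∀ i, pd u i x = 0 := fun i => by simp [pd, hmax.fderiv_eq_zero]
  simpa [Hop, hgrad] using Finset.sum_nonpos fun i _ => pd_pd_nonpos_of_isLocalMax (i := i) hu hmax

theorem Hop_const_mul_coord_sq (c : ℝ) (k : Fin n) {x : Fin m → ℝ}
    (hx : x (Fin.castLE hnm k) ≠ 0) :
    Hop hnm α (fun p => c * p (Fin.castLE hnm k) ^ 2) x = c * (2 + 4 * α k) := by
  set j := Fin.castLE hnm k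
  have hpd : ∀ i, pd (fun p => c * p j ^ 2) i = fun p => if i = j then c * (2 * p j) else 0 := by
    intro i
    rw [pd_comp_apply (g := fun t => c * t ^ 2) (by fun_prop)]
    simp
  have hpd2 : ∀ i, pd (pd (fun p => c * p j ^ 2) i) i x = if i = j then c * 2 else 0 := by
    intro i
    rw [hpd]
    split_ifs with hij
    · subst hij
      rw [pd_comp_apply (g := fun t => c * (2 * t)) (by fun_prop)]
      simp
    · simp [pd]
  simp only [Hop, hpd2]
  simp [hpd, Fin.castLE_inj, j]
  field_simp [show x (Fin.castLE hnm k) ≠ 0 from hx]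
  ring

end Operator

section MaximumPrinciple

variable {m n : ℕ} {hnm : n ≤ m} {α : Fin n → ℝ} {Ω : Set (Fin m → ℝ)}
  {u : (Fin m → ℝ) → ℝ}

theorem exists_mem_frontier_le_of_Hop_pos (hΩopen : IsOpen Ω)
    (hΩbdd : Bornology.IsBounded Ω) (hucont : ContinuousOn u (closure Ω))
    (huC2 : ContDiffOn ℝ 2 u Ω) (hpos : ∀ y ∈ Ω, 0 < Hop hnm α u y) {x : Fin m → ℝ}
    (hx : x ∈ closure Ω) : ∃ y ∈ frontier Ω, u x ≤ u y := by
  obtain ⟨y, hyΩ, hmax⟩ := hΩbdd.isCompact_closure.exists_isMaxOn ⟨x, hx⟩ hucont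
  refine ⟨y, hΩopen.frontier_eq ▸ ⟨hyΩ, fun hy => ?_⟩, hmax hx⟩
  have hloc : IsLocalMax u y :=
    hmax.isLocalMax (mem_of_superset (hΩopen.mem_nhds hy) subset_closure)
  exact (hpos y hy).not_ge
    (Hop_nonpos_of_isLocalMax hnm α (huC2.contDiffAt (hΩopen.mem_nhds hy)) hloc)

theorem nonpos_of_Hop_nonneg (k : Fin n) (hα : -(1 / 2) < α k) (hΩopen : IsOpen Ω)
    (hΩbdd : Bornology.IsBounded Ω) (hΩk : ∀ x ∈ Ω, x (Fin.castLE hnm k) ≠ 0)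
    (hucont : ContinuousOn u (closure Ω)) (huC2 : ContDiffOn ℝ 2 u Ω)
    (hsub : ∀ x ∈ Ω, 0 ≤ Hop hnm α u x) (hbdry : ∀ x ∈ frontier Ω, u x ≤ 0) :
    ∀ x ∈ closure Ω, u x ≤ 0 := by
  set j := Fin.castLE hnm k
  obtain ⟨R, hRpos, hR⟩ := hΩbdd.closure.exists_pos_norm_le
  have hsq : ∀ p ∈ closure Ω, p j ^ 2 ≤ R ^ 2 := fun p hp =>
    sq_le_sq.mpr (((norm_le_pi_norm p j).trans (hR p hp)).trans (le_abs_self R))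
  intro x hx
  refine le_of_forall_pos_le_add fun δ hδ => ?_
  set ε := δ / R ^ 2
  have hε : 0 < ε := by positivity
  set w : (Fin m → ℝ) → ℝ := fun p => ε * p j ^ 2
  have hw : ContDiff ℝ 2 w := by fun_prop
  have hpos : ∀ y ∈ Ω, 0 < Hop hnm α (u + w) y := fun y hy => by
    rw [Hop_add hnm α (huC2.contDiffAt (hΩopen.mem_nhds hy)) hw.contDiffAt,
      Hop_const_mul_coord_sq hnm α ε k (hΩk y hy)]
    exact add_pos_of_nonneg_of_pos (hsub y hy) (mul_pos hε (by linarith))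
  obtain ⟨y, hy, hle⟩ := exists_mem_frontier_le_of_Hop_pos hΩopen hΩbdd
    (hucont.add hw.continuous.continuousOn) (huC2.add hw.contDiffOn) hpos hx
  have hwy : w y ≤ δ := by
    calc w y ≤ ε * R ^ 2 := mul_le_mul_of_nonneg_left (hsq y (frontier_subset_closure hy)) hε.le
      _ = δ := div_mul_cancel₀ δ (by positivity)
  have hwx : 0 ≤ w x := by positivity
  simp only [Pi.add_apply] at hle
  linarith [hbdry y hy]

end MaximumPrinciple

theorem dirichlet_uniqueness_general {m n : ℕ} (hn : 1 ≤ n) (hnm : n ≤ m)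
    (α : Fin n → ℝ) (hα : ∀ k, α k ∈ Set.Ioo (0 : ℝ) (1 / 2))
    (Ω : Set (Fin m → ℝ)) (hΩopen : IsOpen Ω) (hΩbdd : Bornology.IsBounded Ω)
    (hΩsub : Ω ⊆ {x : Fin m → ℝ | ∀ k : Fin n, 0 < x (Fin.castLE hnm k)})
    (u : (Fin m → ℝ) → ℝ)
    (hucont : ContinuousOn u (closure Ω))
    (huC2 : ContDiffOn ℝ 2 u Ω)
    (hsol : ∀ x ∈ Ω, Hop hnm α u x = 0)
    (hbdry : ∀ x ∈ frontier Ω, u x = 0) :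
    ∀ x ∈ closure Ω, u x = 0 := by
  set k : Fin n := ⟨0, hn⟩
  have hαk : -(1 / 2) < α k := by linarith [(hα k).1]
  have hΩk : ∀ x ∈ Ω, x (Fin.castLE hnm k) ≠ 0 := fun x hx => (hΩsub hx k).ne'
  have hle := nonpos_of_Hop_nonneg k hαk hΩopen hΩbdd hΩk hucont huC2
    (fun x hx => (hsol x hx).ge) (fun x hx => (hbdry x hx).le)
  have hge := nonpos_of_Hop_nonneg k hαk hΩopen hΩbdd hΩk hucont.neg huC2.neg
    (fun x hx => by rw [Hop_neg, hsol x hx, neg_zero]) (fun x hx => by simp [hbdry x hx])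
  exact fun x hx => le_antisymm (hle x hx) (neg_nonpos.mp (hge x hx))

/-- Uniqueness for the Dirichlet problem: a regular solution of `H_α^{(m,n)}(u) = 0`
in a bounded domain `Ω ⊆ R_m^{n+}` that is continuous on `cl(Ω)`, continuously
differentiable up to the closure with continuous weighted gradient
`(∏_k x_k^{2α_k})∇u`, and vanishes on the whole boundary of `Ω`, vanishes identically.
Consequently, the solution of the Dirichlet problem, if it exists, is unique. -/
theorem dirichlet_uniqueness {m n : ℕ} (hm : 2 < m) (hn : 1 ≤ n) (hnm : n ≤ m)
    (α : Fin n → ℝ) (hα : ∀ k, α k ∈ Set.Ioo (0 : ℝ) (1 / 2))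
    (Ω : Set (Fin m → ℝ)) (hΩopen : IsOpen Ω) (hΩbdd : Bornology.IsBounded Ω)
    (hΩsub : Ω ⊆ {x : Fin m → ℝ | ∀ k : Fin n, 0 < x (Fin.castLE hnm k)})
    (u : (Fin m → ℝ) → ℝ)
    (hucont : ContinuousOn u (closure Ω))
    (huC1 : ContDiffOn ℝ 1 u (closure Ω))
    (hgrad : ∀ i : Fin m, ContinuousOn
      (fun x : Fin m → ℝ =>
        (∏ k, x (Fin.castLE hnm k) ^ (2 * α k)) * pd u i x) (closure Ω))
    (huC2 : ContDiffOn ℝ 2 u Ω)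
    (hsol : ∀ x ∈ Ω, Hop hnm α u x = 0)
    (hbdry : ∀ x ∈ frontier Ω, u x = 0) :
    ∀ x ∈ closure Ω, u x = 0 :=
  dirichlet_uniqueness_general hn hnm α hα Ω hΩopen hΩbdd hΩsub u hucont huC2 hsol hbdry
end
end
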